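/- Let n be a Fock occupation vector whose shift orbit has cardinality d (so d | M), and let m be a multiple of M/d. Then the vector |E_{n,m}(Λ_j)⟩ = (1/√d) Σ_{k=0}^{d−1} ω^{−(½(M−1)j|n| + m)k} Λ_j^k |n⟩ is a unit eigenvector of Λ_j with eigenvalue ω^{½(M−1)j|n| + m}. -/

import Mathlib

open Finset

noncomputable section

/-- Total photon number `|n|`. -/
def totalPhotons {M : ℕ} (n : Fin M → ℕ) : ℕ := ∑ m : Fin M, n m

/-- Clock label `μ(n) = Σ m·n(m)`. -/
def clockLabel {M : ℕ} (n : Fin M → ℕ) : ℕ := ∑ m : Fin M, (m : ℕ) * n m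

/-- `ω = exp(2πi/M)`. -/
def omegaM (M : ℕ) : ℂ := Complex.exp (2 * Real.pi * Complex.I / M)

/-- The Fock space over `M` modes: amplitudes on occupation vectors. -/
abbrev Fock (M : ℕ) := (Fin M → ℕ) → ℂ

/-- Mode-shift operator: `X |n⟩ = |X·n⟩` with `(X·n)(m) = n(m−1)` mod `M`. -/
def fockX {M : ℕ} [NeZero M] (f : Fock M) : Fock M := fun v => f (fun m => v (m + 1))

/-- Phase-shift operator: `Z |n⟩ = ω^{μ(n)} |n⟩`. -/
def fockZ {M : ℕ} (f : Fock M) : Fock M := fun v => omegaM M ^ clockLabel v * f v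

/-- Fock basis state `|n⟩`. -/
def fockDelta {M : ℕ} (n : Fin M → ℕ) : Fock M := fun v => if v = n then 1 else 0

/-- Cyclic mode shift on occupation vectors: `(X·n)(m) = n(m-1)` mod `M`. -/
def modeShift {M : ℕ} [NeZero M] (n : Fin M → ℕ) : Fin M → ℕ := fun m => n (m - 1)

/-- `ω^{1/2} = exp(πi/M)`. -/
def omegaHalf (M : ℕ) : ℂ := Complex.exp (Real.pi * Complex.I / M)

/-- Generalized Pauli operator `Λ_j = X Z^j`. -/
def fockLambda {M : ℕ} [NeZero M] (j : ℤ) (f : Fock M) : Fock M :=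
  fockX (fun v => omegaM M ^ (j * (clockLabel v : ℤ)) * f v)

/-!
`Λ_j` sends `|v⟩` to `ω^{j μ(v)} |X·v⟩`, so `Λ_j^d |n⟩ = ω^{j S} |n⟩` with `S = Σ_{i<d} μ(X^i·n)`.
Over a full period `M` of the shift every photon visits every mode once, which gives
`2S = d (M-1) |n|`; together with `M/d ∣ m` this makes `λ = ω^{½(M−1)j|n|+m}` a `d`-th root of
`ω^{j S}`. For any operator `T` with `T^d x = λ^d x`, the twisted orbit sum `Σ_{k<d} λ^{-k} T^k x`
is a `λ`-eigenvector. It is normalised because the states `X^k·n`, `k < d`, are distinct and all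
the phases have modulus one.
-/

theorem Function.Periodic.sum_range_mul {A : Type*} [AddCommMonoid A] {f : ℕ → A} {d : ℕ}
    (hf : Function.Periodic f d) (q : ℕ) :
    ∑ i ∈ range (q * d), f i = q • ∑ i ∈ range d, f i := by
  induction q with
  | zero => simp
  | succ q ih =>
    rw [add_mul, one_mul, sum_range_add, ih, succ_nsmul]
    congr 1
    exact sum_congr rfl fun i _ => by rw [add_comm]; simpa using hf.nat_mul q i

theorem Function.minimalPeriod_eq_of_isPeriodicPt {α : Type*} {f : α → α} {x : α} {d : ℕ}
    (hd : 0 < d) (hfix : Function.IsPeriodicPt f d x)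
    (hmin : ∀ k, 0 < k → k < d → f^[k] x ≠ x) :
    Function.minimalPeriod f x = d := by
  refine (hfix.minimalPeriod_le hd).antisymm (not_lt.mp fun hlt => ?_)
  exact hmin _ (hfix.minimalPeriod_pos hd) hlt (Function.iterate_minimalPeriod)

theorem Module.End.apply_sum_inv_pow_smul_pow_apply {K V : Type*} [Field K] [AddCommGroup V]
    [Module K V] (T : Module.End K V) {μ : K} (hμ : μ ≠ 0) {d : ℕ} {x : V}
    (hx : (T ^ d) x = μ ^ d • x) :
    T (∑ k ∈ range d, μ⁻¹ ^ k • (T ^ k) x) = μ • ∑ k ∈ range d, μ⁻¹ ^ k • (T ^ k) x := by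
  set f : ℕ → V := fun k => μ⁻¹ ^ k • (T ^ k) x
  have hfd : f d = f 0 := by simp [f, hx, smul_smul, hμ]
  have hshift : ∑ k ∈ range d, f (k + 1) = ∑ k ∈ range d, f k := by
    have h := sum_range_succ' f d
    rw [sum_range_succ, hfd] at h
    exact (add_right_cancel h).symm
  calc T (∑ k ∈ range d, f k) = ∑ k ∈ range d, μ • f (k + 1) := by
        simp only [f, map_sum, map_smul, pow_succ', Module.End.mul_apply, smul_smul]
        refine sum_congr rfl fun k _ => ?_
        rw [← mul_assoc, mul_inv_cancel₀ hμ, one_mul]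
    _ = μ • ∑ k ∈ range d, f k := by rw [← smul_sum, hshift]

section Omega

variable (M : ℕ)

theorem omegaHalf_sq : omegaHalf M ^ 2 = omegaM M := by
  rw [omegaHalf, omegaM, ← Complex.exp_nat_mul]
  congr 1
  push_cast
  ring

theorem omegaM_ne_zero : omegaM M ≠ 0 :=
  Complex.exp_ne_zero _

theorem omegaM_pow_self [NeZero M] : omegaM M ^ M = 1 :=
  (Complex.isPrimitiveRoot_exp M (NeZero.ne M)).pow_eq_one

theorem norm_omegaHalf : ‖omegaHalf M‖ = 1 := by
  rw [omegaHalf, show (Real.pi : ℂ) * Complex.I / M = ((Real.pi / M : ℝ) : ℂ) * Complex.I by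
    push_cast; ring]
  exact Complex.norm_exp_ofReal_mul_I _

theorem omegaHalf_ne_zero : omegaHalf M ≠ 0 :=
  Complex.exp_ne_zero _

theorem norm_omegaM : ‖omegaM M‖ = 1 := by
  rw [← omegaHalf_sq, norm_pow, norm_omegaHalf, one_pow]

end Omega

section ModeShift

variable {M : ℕ} [NeZero M]

open Fin.NatCast

theorem modeShift_iterate (n : Fin M → ℕ) (i : ℕ) :
    modeShift^[i] n = fun m => n (m - i) := by
  induction i with
  | zero => simp
  | succ i ih =>
    rw [Function.iterate_succ_apply', ih]
    funext m
    simp only [modeShift, Nat.cast_succ, sub_sub, add_comm (1 : Fin M)]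

theorem eq_modeShift_iff (v w : Fin M → ℕ) : w = modeShift v ↔ (fun m => w (m + 1)) = v := by
  constructor <;> rintro rfl <;> funext m <;> simp [modeShift]

theorem clockLabel_modeShift_iterate (n : Fin M → ℕ) (i : ℕ) :
    clockLabel (modeShift^[i] n) = ∑ m : Fin M, ((m + i : Fin M) : ℕ) * n m := by
  rw [modeShift_iterate, clockLabel]
  exact Fintype.sum_equiv (Equiv.subRight (i : Fin M)) _ _ fun m => by simp

theorem sum_range_val_add (m : Fin M) :
    ∑ i ∈ range M, ((m + i : Fin M) : ℕ) = ∑ i ∈ range M, i := by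
  rw [← Fin.sum_univ_eq_sum_range (fun i => ((m + i : Fin M) : ℕ)),
    ← Fin.sum_univ_eq_sum_range (fun i => i)]
  simp only [Fin.cast_val_eq_self]
  exact Fintype.sum_equiv (Equiv.addLeft m) _ _ fun _ => rfl

def orbitClockSum (n : Fin M → ℕ) (k : ℕ) : ℕ :=
  ∑ i ∈ range k, clockLabel (modeShift^[i] n)

theorem orbitClockSum_succ (n : Fin M → ℕ) (k : ℕ) :
    orbitClockSum n (k + 1) = orbitClockSum n k + clockLabel (modeShift^[k] n) :=
  sum_range_succ _ _

theorem two_mul_orbitClockSum_self (n : Fin M → ℕ) :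
    2 * orbitClockSum n M = totalPhotons n * (M * (M - 1)) := by
  simp only [orbitClockSum, clockLabel_modeShift_iterate]
  rw [sum_comm, mul_sum, totalPhotons, sum_mul]
  refine sum_congr rfl fun m _ => ?_
  rw [← sum_mul, sum_range_val_add, ← Finset.sum_range_id_mul_two]
  ring

theorem two_mul_orbitClockSum_of_dvd {n : Fin M → ℕ} {d : ℕ} (hfix : modeShift^[d] n = n)
    (hdM : d ∣ M) : 2 * orbitClockSum n d = totalPhotons n * (d * (M - 1)) := by
  obtain ⟨q, hq⟩ := hdM
  have hq0 : 0 < q := Nat.pos_of_ne_zero fun h => NeZero.ne M (by simp [hq, h])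
  have hperiodic : Function.Periodic (fun i => clockLabel (modeShift^[i] n)) d := fun i => by
    simp only [Function.iterate_add_apply, hfix]
  have hfull : orbitClockSum n M = q * orbitClockSum n d := by
    rw [congr_arg (orbitClockSum n) (hq.trans (mul_comm d q)), orbitClockSum,
      hperiodic.sum_range_mul, smul_eq_mul, orbitClockSum]
  have h := two_mul_orbitClockSum_self n
  rw [hfull] at h
  refine Nat.eq_of_mul_eq_mul_left hq0 ?_
  rw [mul_left_comm, h, show M * (M - 1) = q * (d * (M - 1)) by rw [hq]; ring]
  ring

end ModeShift

section Pauli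

variable {M : ℕ} [NeZero M]

def fockLambdaLinear (j : ℤ) : Module.End ℂ (Fock M) where
  toFun := fockLambda j
  map_add' f g := by
    funext v
    simp only [fockLambda, fockX, Pi.add_apply, mul_add]
  map_smul' c f := by
    funext v
    simp only [fockLambda, fockX, Pi.smul_apply, smul_eq_mul, RingHom.id_apply]
    ring

@[simp]
theorem coe_fockLambdaLinear (j : ℤ) :
    ⇑(fockLambdaLinear j : Module.End ℂ (Fock M)) = fockLambda j :=
  rfl

theorem fockLambda_fockDelta (j : ℤ) (v : Fin M → ℕ) :
    fockLambda j (fockDelta v) = omegaM M ^ (j * (clockLabel v : ℤ)) • fockDelta (modeShift v) := by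
  funext w
  simp only [fockLambda, fockX, fockDelta, Pi.smul_apply, smul_eq_mul, eq_modeShift_iff]
  split_ifs with h
  · rw [h]
  · rw [mul_zero, mul_zero]

theorem fockLambdaLinear_pow_fockDelta (j : ℤ) (n : Fin M → ℕ) (k : ℕ) :
    (fockLambdaLinear j ^ k) (fockDelta n)
      = omegaM M ^ (j * (orbitClockSum n k : ℤ)) • fockDelta (modeShift^[k] n) := by
  induction k with
  | zero => simp [orbitClockSum]
  | succ k ih =>
    rw [pow_succ', Module.End.mul_apply, ih, map_smul, coe_fockLambdaLinear,
      fockLambda_fockDelta, smul_smul, ← zpow_add₀ (omegaM_ne_zero M),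
      Function.iterate_succ_apply', orbitClockSum_succ]
    push_cast
    ring_nf

theorem sum_smul_fockLambdaLinear_pow_fockDelta_apply (j : ℤ) {n : Fin M → ℕ} {d : ℕ}
    (hper : Function.minimalPeriod modeShift n = d) (c : ℕ → ℂ) {k : ℕ} (hk : k < d) :
    (∑ l ∈ range d, c l • (fockLambdaLinear j ^ l) (fockDelta n)) (modeShift^[k] n)
      = c k * omegaM M ^ (j * (orbitClockSum n k : ℤ)) := by
  rw [Finset.sum_apply, sum_eq_single_of_mem k (mem_range.mpr hk)]
  · simp [fockLambdaLinear_pow_fockDelta, fockDelta]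
  · intro l hl hlk
    have hne : modeShift^[k] n ≠ modeShift^[l] n := fun h =>
      hlk (Function.iterate_injOn_Iio_minimalPeriod (by simpa [hper] using hl)
        (by simpa [hper] using hk) h.symm)
    simp [fockLambdaLinear_pow_fockDelta, fockDelta, hne]

theorem omegaHalf_zpow_pow_eq (j : ℤ) {n : Fin M → ℕ} {d : ℕ} (hfix : modeShift^[d] n = n)
    (hdM : d ∣ M) {m : ℕ} (hm : (M / d) ∣ m) :
    (omegaHalf M ^ (((M : ℤ) - 1) * j * (totalPhotons n : ℤ) + 2 * (m : ℤ))) ^ d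
      = omegaM M ^ (j * (orbitClockSum n d : ℤ)) := by
  have hd : 0 < d := Nat.pos_of_dvd_of_pos hdM (NeZero.pos M)
  obtain ⟨q, hq⟩ := hdM
  obtain ⟨m', rfl⟩ : q ∣ m := by rwa [hq, Nat.mul_div_cancel_left _ hd] at hm
  have hS : 2 * (orbitClockSum n d : ℤ) = totalPhotons n * (d * ((M : ℤ) - 1)) := by
    have h := two_mul_orbitClockSum_of_dvd hfix (Dvd.intro q hq.symm)
    zify [NeZero.one_le (n := M)] at h
    exact h
  have hexp : (((M : ℤ) - 1) * j * totalPhotons n + 2 * ((q * m' : ℕ) : ℤ)) * d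
      = 2 * (j * orbitClockSum n d) + 2 * (M * m') := by
    have hMZ : (M : ℤ) = d * q := by exact_mod_cast hq
    push_cast
    linear_combination (-j) * hS + (-2 * (m' : ℤ)) * hMZ
  have hsq : omegaHalf M ^ (2 : ℤ) = omegaM M := by exact_mod_cast omegaHalf_sq M
  rw [← zpow_natCast, ← zpow_mul, hexp, zpow_add₀ (omegaHalf_ne_zero M), zpow_mul _ 2,
    zpow_mul _ 2, hsq, zpow_mul (omegaM M) M, zpow_natCast (omegaM M) M, omegaM_pow_self,
    one_zpow, mul_one]

end Pauli

theorem pauli_eigenvector_general (M : ℕ) [NeZero M] (j : ℤ) (n : Fin M → ℕ) (d : ℕ)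
    (hfix : modeShift^[d] n = n)
    (hmin : ∀ k, 0 < k → k < d → modeShift^[k] n ≠ n)
    (hdM : d ∣ M) (m : ℕ) (hm : (M / d) ∣ m) :
    let e : ℤ := ((M : ℤ) - 1) * j * (totalPhotons n : ℤ) + 2 * (m : ℤ)
    let E : Fock M := fun v => (1 / Real.sqrt d : ℂ) *
      ∑ k ∈ Finset.range d,
        omegaHalf M ^ (-(e * k)) * ((fockLambda j)^[k] (fockDelta n)) v
    fockLambda j E = omegaHalf M ^ e • E ∧
      ∑ k ∈ Finset.range d, ‖E (modeShift^[k] n)‖ ^ 2 = 1 := by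
  intro e E
  set μ := omegaHalf M ^ e
  have hd : 0 < d := Nat.pos_of_dvd_of_pos hdM (NeZero.pos M)
  have hper : Function.minimalPeriod modeShift n = d :=
    Function.minimalPeriod_eq_of_isPeriodicPt hd hfix hmin
  have hE : E = (1 / Real.sqrt d : ℂ) •
      ∑ k ∈ range d, μ⁻¹ ^ k • (fockLambdaLinear j ^ k) (fockDelta n) := by
    funext v
    simp [E, μ, Finset.sum_apply, Module.End.pow_apply, zpow_neg, zpow_mul, inv_pow]
  constructor
  · have hΛd : (fockLambdaLinear j ^ d) (fockDelta n) = μ ^ d • fockDelta n := by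
      rw [fockLambdaLinear_pow_fockDelta, hfix, omegaHalf_zpow_pow_eq j hfix hdM hm]
    have hμ : μ ≠ 0 := zpow_ne_zero _ (omegaHalf_ne_zero M)
    rw [hE, ← coe_fockLambdaLinear, map_smul,
      (fockLambdaLinear j).apply_sum_inv_pow_smul_pow_apply hμ hΛd, smul_comm]
  · have hnorm : ∀ k ∈ range d, ‖E (modeShift^[k] n)‖ ^ 2 = 1 / d := by
      intro k hk
      rw [hE, Pi.smul_apply,
        sum_smul_fockLambdaLinear_pow_fockDelta_apply j hper _ (mem_range.mp hk)]
      simp [μ, norm_zpow, norm_omegaHalf, norm_omegaM]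
    rw [sum_congr rfl hnorm, sum_const, card_range, nsmul_eq_mul]
    field_simp

/-- for `n` with shift orbit of cardinality `d` (so `d ∣ M`) and `m` a
multiple of `M/d`, the vector
`|E_{n,m}(Λ_j)⟩ = (1/√d) Σ_{k<d} ω^{−(½(M−1)j|n|+m)k} Λ_j^k |n⟩`
(written with `ω^{1/2} = exp(πi/M)` and exponent `e = (M−1)j|n| + 2m`)
is a unit eigenvector of `Λ_j` with eigenvalue `ω^{½(M−1)j|n|+m} = (ω^{1/2})^e`. -/
theorem pauli_eigenvector (M : ℕ) [NeZero M] (j : ℤ) (n : Fin M → ℕ) (d : ℕ)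
    (hd : 0 < d) (hfix : modeShift^[d] n = n)
    (hmin : ∀ k, 0 < k → k < d → modeShift^[k] n ≠ n)
    (hdM : d ∣ M) (m : ℕ) (hm : (M / d) ∣ m) :
    let e : ℤ := ((M : ℤ) - 1) * j * (totalPhotons n : ℤ) + 2 * (m : ℤ)
    let E : Fock M := fun v => (1 / Real.sqrt d : ℂ) *
      ∑ k ∈ Finset.range d,
        omegaHalf M ^ (-(e * k)) * ((fockLambda j)^[k] (fockDelta n)) v
    fockLambda j E = omegaHalf M ^ e • E ∧
      ∑ k ∈ Finset.range d, ‖E (modeShift^[k] n)‖ ^ 2 = 1 :=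
  pauli_eigenvector_general M j n d hfix hmin hdM m hm
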